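/- Kemeny's constant of a connected graph G with m edges satisfies κ(G) = (d_G^T R_G d_G)/(4m), where d_G is the degree vector and R_G is the effective resistance matrix. -/

import Mathlib

open SimpleGraph Finset Matrix
open scoped Classical

noncomputable section

/-- Number of spanning trees of `G`. -/
noncomputable def tau {V : Type*} [Fintype V] (G : SimpleGraph V) : ℕ :=
  Set.ncard {H : SimpleGraph V | H ≤ G ∧ H.Connected ∧ H.IsAcyclic}

/-- Number of 2-tree spanning forests of `G` separating `i` and `j`. -/
noncomputable def twoForest {V : Type*} [Fintype V] (G : SimpleGraph V) (i j : V) : ℕ :=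
  Set.ncard {H : SimpleGraph V | H ≤ G ∧ H.IsAcyclic ∧ ¬ H.Reachable i j ∧
    ∀ v, H.Reachable i v ∨ H.Reachable j v}

/-- The four Penrose equations: `B` is the Moore–Penrose inverse of `A`. -/
def IsMoorePenroseInv {n : Type*} [Fintype n] (A B : Matrix n n ℝ) : Prop :=
  A * B * A = A ∧ B * A * B = B ∧ (A * B)ᵀ = A * B ∧ (B * A)ᵀ = B * A

/-- Laplacian matrix of a graph. -/
noncomputable def lap {V : Type*} [Fintype V] [DecidableEq V] (G : SimpleGraph V) :
    Matrix V V ℝ :=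
  fun i j => if i = j then (G.degree i : ℝ) else if G.Adj i j then -1 else 0

/-- Effective resistance computed from a (Moore–Penrose inverse) matrix `Ld`. -/
noncomputable def effRes {V : Type*} [Fintype V] [DecidableEq V] (Ld : Matrix V V ℝ)
    (i j : V) : ℝ :=
  (Pi.single i 1 - Pi.single j 1) ⬝ᵥ Ld.mulVec (Pi.single i 1 - Pi.single j 1)

/-- Transition matrix of the simple random walk on `G`. -/
noncomputable def transP {V : Type*} [Fintype V] (G : SimpleGraph V) : Matrix V V ℝ :=
  fun i j => if G.Adj i j then (1 : ℝ) / (G.degree i) else 0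

/-- Stationary distribution of the simple random walk. -/
noncomputable def statPi {V : Type*} [Fintype V] (G : SimpleGraph V) (i : V) : ℝ :=
  (G.degree i : ℝ) / (2 * G.edgeFinset.card)

/-- `M` is the matrix of mean first passage times of the random walk on `G`. -/
def IsMFPT {V : Type*} [Fintype V] (G : SimpleGraph V) (M : V → V → ℝ) : Prop :=
  (∀ j, M j j = 0) ∧ ∀ i j, i ≠ j → M i j = 1 + ∑ k, transP G i k * M k j

/-- Kemeny's constant. -/
noncomputable def kemeny {V : Type*} [Fintype V] (G : SimpleGraph V) (M : V → V → ℝ) : ℝ :=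
  ∑ i, ∑ j ∈ Finset.univ.filter (· ≠ i), statPi G i * M i j * statPi G j

/-- Accessibility index of vertex `v`. -/
noncomputable def acc {V : Type*} [Fintype V] (G : SimpleGraph V) (M : V → V → ℝ) (v : V) : ℝ :=
  ∑ i ∈ Finset.univ.filter (· ≠ v), statPi G i * M i v

/-- Joining `G1` and `G2` by the bridge `v1 ∼ v2`. -/
def chainTwo {V1 V2 : Type*} (G1 : SimpleGraph V1) (G2 : SimpleGraph V2)
    (v1 : V1) (v2 : V2) : SimpleGraph (V1 ⊕ V2) where
  Adj p q :=
    match p, q with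
    | Sum.inl a, Sum.inl b => G1.Adj a b
    | Sum.inr a, Sum.inr b => G2.Adj a b
    | Sum.inl a, Sum.inr b => a = v1 ∧ b = v2
    | Sum.inr a, Sum.inl b => b = v1 ∧ a = v2
  symm := by
    constructor
    rintro (a | a) (b | b) h
    · exact G1.symm.symm _ _ h
    · exact ⟨h.1, h.2⟩
    · exact ⟨h.1, h.2⟩
    · exact G2.symm.symm _ _ h
  loopless := by
    constructor
    rintro (a | a) h
    · exact G1.loopless.irrefl a h
    · exact G2.loopless.irrefl a h

end

/-!
Fix a target `j` and let `f = M(·, j)`. The first-step recurrence says `L f = d - 2m eⱼ` outside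
row `j`, and row `j` follows because the columns of the Laplacian `L` sum to zero. As `L L⁺ L = L`,
the vector `f - L⁺ L f` lies in `ker L`, which holds only constants on a connected graph, so
`M i j = (L⁺ d)ᵢ - (L⁺ d)ⱼ - 2m (L⁺ᵢⱼ - L⁺ⱼⱼ)`. Adding `M j i` gives the commute-time identity
`M i j + M j i = 2m rᵢⱼ`, and symmetrising the double sum defining `κ` turns it into `dᵀ R d / 4m`.
-/

theorem effRes_eq {V : Type*} [Fintype V] [DecidableEq V] (Ld : Matrix V V ℝ) (i j : V) :
    effRes Ld i j = Ld i i - Ld i j - Ld j i + Ld j j := by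
  simp [effRes, mulVec_sub, sub_dotProduct, dotProduct_sub, mulVec_single, single_dotProduct]
  ring

theorem two_mul_sum_sum_eq_sum_sum_add_swap {ι R : Type*} [Fintype ι] [CommRing R] (w : ι → R)
    (A : ι → ι → R) :
    2 * ∑ i, ∑ j, w i * A i j * w j = ∑ i, ∑ j, w i * (A i j + A j i) * w j := by
  have swap : ∑ i, ∑ j, w i * A j i * w j = ∑ i, ∑ j, w i * A i j * w j := by
    rw [sum_comm]
    exact sum_congr rfl fun i _ => sum_congr rfl fun j _ => by ring
  simp only [mul_add, add_mul, sum_add_distrib, swap]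
  ring

namespace SimpleGraph

variable {V : Type*} [Fintype V] (G : SimpleGraph V)

theorem sum_transP_mul (i : V) (x : V → ℝ) :
    ∑ k, transP G i k * x k = (∑ k ∈ G.neighborFinset i, x k) / G.degree i := by
  simp only [transP, ite_mul, zero_mul, ← sum_filter, neighborFinset_eq_filter, sum_div]
  exact sum_congr rfl fun k _ => by ring

theorem kemeny_eq_sum_of_diag_eq_zero {M : V → V → ℝ} (hM : ∀ j, M j j = 0) :
    kemeny G M = ∑ i, ∑ j, statPi G i * M i j * statPi G j := by
  refine sum_congr rfl fun i _ => sum_filter_of_ne fun j _ hj => ?_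
  rintro rfl
  simp [hM] at hj

variable [DecidableEq V]

theorem lap_eq_lapMatrix : lap G = G.lapMatrix ℝ := by
  ext i j
  by_cases h : i = j
  · subst h; simp [lap, lapMatrix, degMatrix]
  · simp [lap, lapMatrix, degMatrix, h, adjMatrix_apply, apply_ite]

theorem sum_lapMatrix_mulVec {R : Type*} [CommRing R] [DecidableRel G.Adj] (f : V → R) :
    ∑ a, (G.lapMatrix R *ᵥ f) a = 0 := by
  have := dotProduct_mulVec (fun _ => (1 : R)) (G.lapMatrix R) f
  rw [← mulVec_transpose, (isSymm_lapMatrix R G).eq, lapMatrix_mulVec_const_eq_zero,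
    zero_dotProduct] at this
  simpa [dotProduct] using this

theorem sub_eq_of_lapMatrix_mulVec_eq [DecidableRel G.Adj] (hG : G.Connected)
    {Ld : Matrix V V ℝ} (hLd : G.lapMatrix ℝ * Ld * G.lapMatrix ℝ = G.lapMatrix ℝ)
    {f b : V → ℝ} (hf : G.lapMatrix ℝ *ᵥ f = b) (i j : V) :
    f i - f j = (Ld *ᵥ b) i - (Ld *ᵥ b) j := by
  have hker : G.lapMatrix ℝ *ᵥ (f - Ld *ᵥ b) = 0 := by
    rw [mulVec_sub, ← hf, mulVec_mulVec, mulVec_mulVec, hLd, sub_self]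
  have := (lapMatrix_mulVec_eq_zero_iff_forall_reachable G).1 hker i j (hG i j)
  simp only [Pi.sub_apply] at this
  linarith

theorem lapMatrix_mulVec_mfpt (hG : G.Connected) {M : V → V → ℝ} (hM : IsMFPT G M) (j : V) :
    G.lapMatrix ℝ *ᵥ (fun v => M v j) =
      (fun a => (G.degree a : ℝ)) - Pi.single j (2 * #G.edgeFinset : ℝ) := by
  have off_diag : ∀ a ≠ j, (G.lapMatrix ℝ *ᵥ (fun v => M v j)) a = G.degree a := by
    intro a ha
    have hdeg : (G.degree a : ℝ) ≠ 0 := by exact_mod_cast ((hG a j).degree_pos_left ha).ne'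
    rw [lapMatrix_mulVec_apply, hM.2 a j ha, sum_transP_mul]
    field_simp
    ring
  ext a
  by_cases ha : a = j
  · subst ha
    have hsum := sum_lapMatrix_mulVec G (fun v => M v a)
    rw [← add_sum_erase _ _ (mem_univ a), sum_congr rfl fun b hb => off_diag b (ne_of_mem_erase hb),
      sum_erase_eq_sub (mem_univ a)] at hsum
    have hdeg : ∑ v, (G.degree v : ℝ) = 2 * #G.edgeFinset := by
      exact_mod_cast G.sum_degrees_eq_twice_card_edges
    simp only [Pi.sub_apply, Pi.single_eq_same]
    linarith
  · simp [off_diag a ha, ha]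

theorem mfpt_eq (hG : G.Connected) {M : V → V → ℝ} (hM : IsMFPT G M) {Ld : Matrix V V ℝ}
    (hLd : G.lapMatrix ℝ * Ld * G.lapMatrix ℝ = G.lapMatrix ℝ) (i j : V) :
    M i j = (Ld *ᵥ fun v => (G.degree v : ℝ)) i - (Ld *ᵥ fun v => (G.degree v : ℝ)) j -
      2 * #G.edgeFinset * (Ld i j - Ld j j) := by
  have := G.sub_eq_of_lapMatrix_mulVec_eq hG hLd (G.lapMatrix_mulVec_mfpt hG hM j) i j
  simp only [hM.1 j, sub_zero, mulVec_sub, Pi.sub_apply, mulVec_single, Pi.smul_apply,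
    op_smul_eq_mul, col_apply] at this
  rw [this]
  ring

theorem mfpt_add_mfpt_eq_mul_effRes (hG : G.Connected) {M : V → V → ℝ} (hM : IsMFPT G M)
    {Ld : Matrix V V ℝ} (hLd : G.lapMatrix ℝ * Ld * G.lapMatrix ℝ = G.lapMatrix ℝ) (i j : V) :
    M i j + M j i = 2 * #G.edgeFinset * effRes Ld i j := by
  rw [G.mfpt_eq hG hM hLd i j, G.mfpt_eq hG hM hLd j i, effRes_eq]
  ring

end SimpleGraph

/-- `κ(G) = (d_Gᵀ R_G d_G)/(4m)`. -/
theorem kemeny_eq_dRd {V : Type*} [Fintype V] [DecidableEq V]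
    (G : SimpleGraph V) (hG : G.Connected) (M : V → V → ℝ) (hM : IsMFPT G M)
    (Ld : Matrix V V ℝ) (hLd : IsMoorePenroseInv (lap G) Ld) :
    kemeny G M =
      (∑ i, ∑ j, (G.degree i : ℝ) * effRes Ld i j * (G.degree j : ℝ)) /
        (4 * (G.edgeFinset.card : ℝ)) := by
  have hLd' : G.lapMatrix ℝ * Ld * G.lapMatrix ℝ = G.lapMatrix ℝ := G.lap_eq_lapMatrix ▸ hLd.1
  have hπ (i j : V) : statPi G i * (2 * #G.edgeFinset * effRes Ld i j) * statPi G j =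
      G.degree i * effRes Ld i j * G.degree j / (2 * #G.edgeFinset) := by
    unfold statPi
    -- on an edgeless graph `statPi` divides by zero and both sides vanish
    rcases eq_or_ne (2 * #G.edgeFinset : ℝ) 0 with h | h
    · simp [h]
    · field_simp
  have hsym := two_mul_sum_sum_eq_sum_sum_add_swap (statPi G) M
  simp only [G.mfpt_add_mfpt_eq_mul_effRes hG hM hLd', hπ, ← sum_div,
    ← G.kemeny_eq_sum_of_diag_eq_zero hM.1] at hsym
  rw [show 4 * (#G.edgeFinset : ℝ) = 2 * #G.edgeFinset * 2 by ring, ← div_div]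
  linarith
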